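/- arXiv:2506.02446 — 7 statements merged into one kernel-verified Lean document; each statement's English description precedes it below -/
import Mathlib

section
/- Let q be an odd prime power and let a ∈ F_q with a ∉ {0,1}, so that (a,a) is a valid pair and Q_{a,a} has operation x*y = x + a(y-x). Then every autotopism (α,β,γ) of Q_{a,a} has the following form: there exist an additive bijection θ : F_q → F_q and elements u, v ∈ F_q such that for all x ∈ F_q, α(x) = (1-a)^{-1}·θ((1-a)x + u), β(x) = a^{-1}·θ(ax + v), and γ(x) = θ(x + u + v). -/
open scoped Classical
open Finset

noncomputable section

variable {F : Type*} [Field F] [Fintype F]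

/-- `x ∈ R_q`: `x` is a nonzero square in `F`. -/
def inR (x : F) : Prop := x ≠ 0 ∧ IsSquare x

/-- `x ∈ N_q`: `x` is a nonzero non-square in `F`. -/
def inN (x : F) : Prop := x ≠ 0 ∧ ¬ IsSquare x

/-- `(a, b)` is a valid pair: `ab ∈ R_q` and `(a-1)(b-1) ∈ R_q`. -/
def ValidPair (a b : F) : Prop := inR (a * b) ∧ inR ((a - 1) * (b - 1))

/-- The operation of the quadratic quasigroup `Q_{a,b}`:
`x*y = x + a(y-x)` if `y - x ∈ R_q`, `x*y = x + b(y-x)` if `y - x ∈ N_q`, and `x*x = x`. -/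
def qmul (a b x y : F) : F :=
  if inR (y - x) then x + a * (y - x) else x + b * (y - x)

/-- Every autotopism `(α,β,γ)` of `Q_{a,a}` (where `a ∉ {0,1}`) has the form
`α(x) = (1-a)⁻¹·θ((1-a)x + u)`, `β(x) = a⁻¹·θ(ax + v)`, `γ(x) = θ(x + u + v)` for some
additive bijection `θ` of `F_q` and some `u, v ∈ F_q`. -/
theorem autotopism_of_Qaa_form
    (hodd : Odd (Fintype.card F)) (a : F) (ha0 : a ≠ 0) (ha1 : a ≠ 1)
    (α β γ : Equiv.Perm F)
    (hatp : ∀ x y : F, qmul a a (α x) (β y) = γ (qmul a a x y)) :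
    ∃ (θ : F ≃+ F) (u v : F),
      (∀ x : F, α x = (1 - a)⁻¹ * θ ((1 - a) * x + u)) ∧
      (∀ x : F, β x = a⁻¹ * θ (a * x + v)) ∧
      (∀ x : F, γ x = θ (x + u + v)) := by
  have hq : ∀ x y : F, qmul a a x y = x + a * (y - x) := fun x y => ite_self _
  have ha1' : (1 : F) - a ≠ 0 := sub_ne_zero.mpr (Ne.symm ha1)
  have E : ∀ x y : F, (1 - a) * α x + a * β y = γ ((1 - a) * x + a * y) := by
    intro x y
    have h := hatp x y
    rw [hq, hq] at h
    rw [show (1 - a) * x + a * y = x + a * (y - x) by ring,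
      show (1 - a) * α x + a * β y = α x + a * (β y - α x) by ring, h]
  have hadd : ∀ s t : F, (γ.trans (Equiv.subRight (γ 0))) (s + t)
      = (γ.trans (Equiv.subRight (γ 0))) s + (γ.trans (Equiv.subRight (γ 0))) t := by
    intro s t
    simp only [Equiv.trans_apply, Equiv.subRight_apply]
    have h1 := E ((1 - a)⁻¹ * s) (a⁻¹ * t)
    have h2 := E ((1 - a)⁻¹ * s) 0
    have h3 := E 0 (a⁻¹ * t)
    have h4 := E 0 0
    rw [show (1-a) * ((1-a)⁻¹ * s) + a * (a⁻¹ * t) = s + t by field_simp] at h1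
    rw [show (1-a) * ((1-a)⁻¹ * s) + a * (0:F) = s by field_simp; ring] at h2
    rw [show (1-a) * (0:F) + a * (a⁻¹ * t) = t by field_simp; ring] at h3
    rw [show (1-a) * (0:F) + a * (0:F) = (0:F) by ring] at h4
    linear_combination h2 + h3 - h1 - h4
  set θ : F ≃+ F := AddEquiv.mk' (γ.trans (Equiv.subRight (γ 0))) hadd with hθdef
  have hθ' : ∀ z : F, θ z = γ z - γ 0 := fun z => rfl
  refine ⟨θ, θ.symm (γ 0 - a * β 0), θ.symm (γ 0 - (1 - a) * α 0), ?_, ?_, ?_⟩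
  · intro x
    have key : θ ((1 - a) * x + θ.symm (γ 0 - a * β 0)) = (1 - a) * α x := by
      rw [map_add, θ.apply_symm_apply, hθ']
      have h2 := E x 0
      rw [show (1-a)*x + a * (0:F) = (1-a)*x by ring] at h2
      linear_combination -h2
    rw [key, inv_mul_cancel_left₀ ha1']
  · intro x
    have key : θ (a * x + θ.symm (γ 0 - (1 - a) * α 0)) = a * β x := by
      rw [map_add, θ.apply_symm_apply, hθ']
      have h3 := E 0 x
      rw [show (1-a)*(0:F) + a * x = a * x by ring] at h3
      linear_combination -h3
    rw [key, inv_mul_cancel_left₀ ha0]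
  · intro x
    rw [map_add, map_add, θ.apply_symm_apply, θ.apply_symm_apply, hθ']
    have h4 := E 0 0
    rw [show (1-a)*(0:F) + a * (0:F) = (0:F) by ring] at h4
    linear_combination h4
end
end

section
/- Let q be an odd prime power, let (a,b) be a valid pair in F_q^2, and let i, j be distinct elements of F_q. Let r_{i,j} be the row permutation of Q_{a,b} from row i to row j, and let r_{0,1} and r'_{0,1} be the row permutations from row 0 to row 1 of Q_{a,b} and of Q_{b,a} respectively. Then: (i) if q ≡ 3 (mod 4), r_{i,j} is conjugate to r_{0,1} in the symmetric group on F_q (i.e., they have the same cycle structure); (ii) if q ≡ 1 (mod 4), then r_{i,j} is conjugate to r_{0,1} when j - i ∈ R_q, and r_{i,j} is conjugate to r'_{0,1} when j - i ∈ N_q. -/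
open scoped Classical
open Finset

noncomputable section

variable {F : Type*} [Field F] [Fintype F]

omit [Fintype F] in
lemma isSquare_mul_left_iff {c t : F} (hc0 : c ≠ 0) (hc : IsSquare c) :
    IsSquare (c * t) ↔ IsSquare t := by
  constructor
  · intro h
    have ht : t = c⁻¹ * (c * t) := by field_simp
    rw [ht]
    exact ((isSquare_inv (a := c)).2 hc).mul h
  · exact fun h => hc.mul h

lemma nonsquare_mul_iff {c t : F} (hc0 : c ≠ 0) (ht0 : t ≠ 0)
    (hc : ¬ IsSquare c) : IsSquare (c * t) ↔ ¬ IsSquare t := by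
  have hχc : quadraticChar F c = -1 := quadraticChar_neg_one_iff_not_isSquare.2 hc
  have hne : (c * t) ≠ 0 := mul_ne_zero hc0 ht0
  rw [← quadraticChar_one_iff_isSquare hne, map_mul, hχc,
    ← quadraticChar_neg_one_iff_not_isSquare]
  constructor
  · intro h; linarith
  · intro h; rw [h]; ring

omit [Fintype F] in
lemma valid_a_ne_zero {a b : F} (hv : ValidPair a b) : a ≠ 0 := by
  intro h; apply hv.1.1; rw [h, zero_mul]

omit [Fintype F] in
lemma valid_b_ne_zero {a b : F} (hv : ValidPair a b) : b ≠ 0 := by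
  intro h; apply hv.1.1; rw [h, mul_zero]

lemma valid_sq_iff {a b : F} (hv : ValidPair a b) :
    IsSquare a ↔ IsSquare b := by
  have ha := valid_a_ne_zero hv
  have hb := valid_b_ne_zero hv
  have hab : IsSquare (a * b) := hv.1.2
  by_cases h : IsSquare a
  · simp only [h, true_iff]
    by_contra hB
    rw [mul_comm] at hab
    exact (nonsquare_mul_iff hb ha hB).1 hab h
  · simp only [h, false_iff]
    exact (nonsquare_mul_iff ha hb h).1 hab

omit [Fintype F] in
lemma qmul_self (a b x : F) : qmul a b x x = x := by
  simp [qmul, inR]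

omit [Fintype F] in
/-- Conjugating `qmul` by an affine map with square slope. -/
lemma qmul_affine_sq (a b : F) {c : F} (hc0 : c ≠ 0) (hc : IsSquare c) (t x y : F) :
    c * qmul a b x y + t = qmul a b (c * x + t) (c * y + t) := by
  have key : (c * y + t) - (c * x + t) = c * (y - x) := by ring
  have hiff : inR ((c * y + t) - (c * x + t)) ↔ inR (y - x) := by
    rw [key]
    unfold inR
    rw [mul_ne_zero_iff, isSquare_mul_left_iff hc0 hc]
    tauto
  unfold qmul
  by_cases h : inR (y - x)
  · rw [if_pos (hiff.2 h), if_pos h, key]; ring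
  · rw [if_neg fun hh => h (hiff.1 hh), if_neg h, key]; ring

/-- Conjugating `qmul` by an affine map with non-square slope swaps `a` and `b`. -/
lemma qmul_affine_nonsq (a b : F) {c : F} (hc0 : c ≠ 0) (hc : ¬ IsSquare c) (t x y : F) :
    c * qmul b a x y + t = qmul a b (c * x + t) (c * y + t) := by
  by_cases hxy : y = x
  · subst hxy; rw [qmul_self, qmul_self]
  have hne : y - x ≠ 0 := sub_ne_zero.2 hxy
  have key : (c * y + t) - (c * x + t) = c * (y - x) := by ring
  have hiff : inR ((c * y + t) - (c * x + t)) ↔ ¬ inR (y - x) := by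
    rw [key]
    unfold inR
    rw [mul_ne_zero_iff, nonsquare_mul_iff hc0 hne hc]
    tauto
  unfold qmul
  by_cases h : inR (y - x)
  · rw [if_neg fun hh => (hiff.1 hh) h, if_pos h, key]; ring
  · rw [if_pos (hiff.2 h), if_neg h, key]; ring

/-- Rows of a quadratic quasigroup are injective. -/
lemma row_inj {a b : F} (hv : ValidPair a b) (i : F) :
    Function.Injective (fun k => qmul a b i k) := by
  have ha := valid_a_ne_zero hv
  have hb := valid_b_ne_zero hv
  have hsab : IsSquare a ↔ IsSquare b := valid_sq_iff hv
  intro y1 y2 h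
  simp only [qmul] at h
  -- auxiliary: the mixed case is impossible
  have mixed : ∀ u v : F, inR u → ¬ inR v → a * u ≠ b * v := by
    intro u v hu hv2 heq
    rcases eq_or_ne v 0 with hv0 | hv0
    · rw [hv0, mul_zero] at heq
      exact (mul_ne_zero ha hu.1) heq
    · have hvns : ¬ IsSquare v := fun hs => hv2 ⟨hv0, hs⟩
      have h1 : IsSquare (a * u) ↔ IsSquare a := by
        rw [mul_comm]; exact isSquare_mul_left_iff hu.1 hu.2
      have h2 : IsSquare (b * v) ↔ ¬ IsSquare b := by
        rw [mul_comm]; exact nonsquare_mul_iff hv0 hb hvns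
      rw [heq, h2] at h1
      tauto
  by_cases h1 : inR (y1 - i) <;> by_cases h2 : inR (y2 - i)
  · rw [if_pos h1, if_pos h2] at h
    exact sub_left_injective (mul_left_cancel₀ ha (add_left_cancel h))
  · rw [if_pos h1, if_neg h2] at h
    exact absurd (add_left_cancel h) (mixed _ _ h1 h2)
  · rw [if_neg h1, if_pos h2] at h
    exact absurd (add_left_cancel h).symm (mixed _ _ h2 h1)
  · rw [if_neg h1, if_neg h2] at h
    exact sub_left_injective (mul_left_cancel₀ hb (add_left_cancel h))

/-- Key conjugation lemma: if an affine map with slope `c` intertwines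
`qmul a' b'` with `qmul a b`, sends `0` to `i'` and `1` to `j'`, then the row permutation
`Q` (row `0` to `1` of `Q_{a',b'}`) is conjugate to `P` (row `i'` to `j'` of `Q_{a,b}`). -/
lemma conj_row {a b a' b' : F} {i' j' : F}
    (hsurj : Function.Surjective (fun k => qmul a b i' k))
    (P Q : Equiv.Perm F)
    (hP : ∀ k, P (qmul a b i' k) = qmul a b j' k)
    (hQ : ∀ k, Q (qmul a' b' 0 k) = qmul a' b' 1 k)
    {c : F} (hc0 : c ≠ 0)
    (hσ : ∀ x y, c * qmul a' b' x y + i' = qmul a b (c * x + i') (c * y + i'))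
    (h1 : c * 1 + i' = j') :
    IsConj Q P := by
  set σ : Equiv.Perm F := (Equiv.mulLeft₀ c hc0).trans (Equiv.addRight i') with hσdef
  have happ : ∀ x, σ x = c * x + i' := fun x => rfl
  have key : ∀ z, σ (Q (σ⁻¹ z)) = P z := by
    intro z
    obtain ⟨k, hk⟩ := hsurj z
    set m := σ⁻¹ k with hm
    have hkm : k = c * m + i' := by
      have : σ m = k := Equiv.apply_symm_apply σ k
      rw [← this, happ]
    have e0 : σ (qmul a' b' 0 m) = qmul a b i' k := by
      rw [happ, hσ 0 m, hkm]
      norm_num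
    have einv : σ⁻¹ z = qmul a' b' 0 m := by
      rw [← hk]
      simp only []
      rw [← e0]
      exact Equiv.symm_apply_apply σ _
    rw [einv, hQ m, happ, hσ 1 m, h1, ← hkm, ← hk]
    exact (hP k).symm
  rw [isConj_iff]
  refine ⟨σ, ?_⟩
  ext z
  simp only [Equiv.Perm.coe_mul, Function.comp_apply]
  exact key z

/-- Lemma 2.1: cycle structure (conjugacy in the symmetric group) of row permutations of a
quadratic Latin square. Here `rij`, `r01`, `r01'` are the row permutations `r_{i,j}` of
`Q_{a,b}`, `r_{0,1}` of `Q_{a,b}`, and `r_{0,1}` of `Q_{b,a}` respectively. -/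
theorem row_permutation_cycle_structure
    (hodd : Odd (Fintype.card F)) (a b : F) (hv : ValidPair a b)
    (i j : F) (hij : i ≠ j)
    (rij r01 r01' : Equiv.Perm F)
    (hrij : ∀ k : F, rij (qmul a b i k) = qmul a b j k)
    (hr01 : ∀ k : F, r01 (qmul a b 0 k) = qmul a b 1 k)
    (hr01' : ∀ k : F, r01' (qmul b a 0 k) = qmul b a 1 k) :
    (Fintype.card F % 4 = 3 → IsConj r01 rij) ∧
    (Fintype.card F % 4 = 1 →
      (inR (j - i) → IsConj r01 rij) ∧ (inN (j - i) → IsConj r01' rij)) := by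
  have hc0 : j - i ≠ 0 := sub_ne_zero.2 (Ne.symm hij)
  have hsurjI : Function.Surjective (fun k => qmul a b i k) :=
    Finite.injective_iff_surjective.1 (row_inj hv i)
  have hsurjJ : Function.Surjective (fun k => qmul a b j k) :=
    Finite.injective_iff_surjective.1 (row_inj hv j)
  -- square case
  have HR : IsSquare (j - i) → IsConj r01 rij := by
    intro hsq
    exact conj_row hsurjI rij r01 hrij hr01 hc0
      (qmul_affine_sq a b hc0 hsq i) (by ring)
  -- non-square case
  have HN : ¬ IsSquare (j - i) → IsConj r01' rij := by
    intro hns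
    exact conj_row hsurjI rij r01' hrij hr01' hc0
      (qmul_affine_nonsq a b hc0 hns i) (by ring)
  refine ⟨?_, ?_⟩
  · intro h3
    by_cases hsq : IsSquare (j - i)
    · exact HR hsq
    · -- conjugate by the reversed affine map with square slope `-(j-i)`
      have hm1 : ¬ IsSquare (-1 : F) := by
        rw [FiniteField.isSquare_neg_one_iff]
        simpa using h3
      have hnegsq : IsSquare (-(j - i)) := by
        have := (nonsquare_mul_iff (neg_ne_zero.2 one_ne_zero) hc0 hm1).2 hsq
        rwa [neg_one_mul] at this
      have hneg0 : -(j - i) ≠ 0 := neg_ne_zero.2 hc0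
      have hPinv : ∀ k : F, rij⁻¹ (qmul a b j k) = qmul a b i k := by
        intro k
        rw [← hrij k]
        exact Equiv.symm_apply_apply rij _
      have hconj : IsConj r01 rij⁻¹ :=
        conj_row hsurjJ rij⁻¹ r01 hPinv hr01 hneg0
          (qmul_affine_sq a b hneg0 hnegsq j) (by ring)
      rw [Equiv.Perm.isConj_iff_cycleType_eq] at hconj ⊢
      rwa [Equiv.Perm.cycleType_inv] at hconj
  · intro _
    exact ⟨fun h => HR h.2, fun h => HN h.2⟩
end
end

section
/- Let q be an odd prime power, let (a,b) be a valid pair in F_q^2 with a ≠ b and a ∈ R_q, and let ω = ω[a,b]. Then: (i) ω satisfies (-1,-1,-1,1) if and only if 2(b-1)(a-b) ∈ R_q and each of (2ab-a-b)(a-b), b(a+b)(b-1)(a-b), b(a+b-2)(a-b) lies in N_q; (ii) ω satisfies (-1,-1,1,-1) if and only if 2a(1-b)(a-b) ∈ R_q and each of (a+b)(1-b)(a-b), b(a+b-2ab)(a-b), (2-a-b)(a-b) lies in N_q; (iii) ω satisfies (-1,1,1,1) if and only if each of (a+b-2)(a-b), (a-1)(a+b)(a-b), a(2ab-a-b)(a-b)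 lies in R_q and 2b(a-1)(a-b) ∈ N_q; (iv) ω satisfies (1,-1,1,1) if and only if each of a(2-a-b)(a-b), (a+b-2ab)(a-b), a(1-a)(a+b)(a-b) lies in R_q and 2(1-a)(a-b) ∈ N_q. -/
open scoped Classical
open Finset

noncomputable section

variable {F : Type*} [Field F] [Fintype F]

/-- The extended quadratic character `χ` of `F_q`. -/
def chi (x : F) : ℤ := if x = 0 then 0 else if IsSquare x then 1 else -1

/-- The quadratic map `φ = φ[a,b]`: `φ(x) = ax` if `x ∈ R_q` and `φ(x) = bx` otherwise. -/
def phi (a b x : F) : F := if inR x then a * x else b * x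

/-- `ω` satisfies `z = (z₀,z₁,z₂,z₃)` with `j`, where `φE` is the permutation induced by
`φ[a,b]`: `ω(ω(j)) = j`, `χ(j) = z₀`, `χ(φ⁻¹(j)-1) = z₁`, `χ(ω(j)) = z₂`, and
`χ(φ⁻¹(ω(j))-1) = z₃`. -/
def SatisfiesWith (ω φE : Equiv.Perm F) (z : ℤ × ℤ × ℤ × ℤ) (j : F) : Prop :=
  ω (ω j) = j ∧ chi j = z.1 ∧ chi (φE.symm j - 1) = z.2.1 ∧
    chi (ω j) = z.2.2.1 ∧ chi (φE.symm (ω j) - 1) = z.2.2.2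

/-- `ω` satisfies `z` if it satisfies `z` with some `j ∈ F_q`. -/
def Satisfies (ω φE : Equiv.Perm F) (z : ℤ × ℤ × ℤ × ℤ) : Prop :=
  ∃ j : F, SatisfiesWith ω φE z j


lemma chi_eq_one_iff {x : F} : chi x = 1 ↔ inR x := by
  unfold chi inR; split_ifs with h h2 <;> simp_all

lemma chi_eq_negone_iff {x : F} : chi x = -1 ↔ inN x := by
  unfold chi inN; split_ifs with h h2 <;> simp_all

lemma chi_sq_mul {s : F} (x : F) (hs : s ≠ 0) : chi (s^2 * x) = chi x := by
  rcases eq_or_ne x 0 with rfl | hx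
  · simp
  have h0 : s^2 * x ≠ 0 := mul_ne_zero (pow_ne_zero 2 hs) hx
  have hsq : IsSquare (s^2 * x) ↔ IsSquare x := by
    constructor
    · rintro ⟨t, ht⟩
      exact ⟨t/s, by field_simp; linear_combination ht⟩
    · rintro ⟨t, ht⟩
      exact ⟨s*t, by rw [ht]; ring⟩
  simp only [chi, h0, hx, if_neg, hsq]

lemma chi_div (x t : F) (ht : t ≠ 0) : chi (x / t) = chi (x * t) := by
  rw [show x / t = (1/t)^2 * (x * t) by field_simp, chi_sq_mul _ (one_div_ne_zero ht)]

lemma master (φE ω : Equiv.Perm F)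
    (hω : ∀ x : F, ω x = 1 + φE (φE.symm x - 1))
    (Hpres : ∀ x : F, chi (φE x) = chi x)
    (s₀ s₁ s₂ s₃ : ℤ) (c d e f : F)
    (Hc : ∀ x : F, chi x = s₀ → φE x = c * x)
    (Hd : ∀ x : F, chi x = s₁ → φE x = d * x)
    (He : ∀ x : F, chi x = s₂ → φE x = e * x)
    (Hf : ∀ x : F, chi x = s₃ → φE x = f * x)
    (hcm : ∀ x : F, chi (c * x) = chi x) (hem : ∀ x : F, chi (e * x) = chi x) :
    Satisfies ω φE (s₀, s₁, s₂, s₃) ↔ ∃ i i' : F,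
      1 + d * (i - 1) = e * i' ∧ 1 + f * (i' - 1) = c * i ∧
      chi (c * i) = s₀ ∧ chi (i - 1) = s₁ ∧ chi (e * i') = s₂ ∧ chi (i' - 1) = s₃ := by
  constructor
  · rintro ⟨j, h0, hj, h1, h2, h3⟩
    refine ⟨φE.symm j, φE.symm (ω j), ?_, ?_, ?_, h1, ?_, h3⟩
    · have hchi : chi (φE.symm j) = s₀ := by
        rw [← Hpres (φE.symm j), Equiv.apply_symm_apply]; exact hj
      have hji : j = c * φE.symm j := by
        rw [← Hc _ hchi, Equiv.apply_symm_apply]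
      have hchi2 : chi (φE.symm (ω j)) = s₂ := by
        rw [← Hpres (φE.symm (ω j)), Equiv.apply_symm_apply]; exact h2
      have hk : ω j = e * φE.symm (ω j) := by
        rw [← He _ hchi2, Equiv.apply_symm_apply]
      rw [← hk, hω j, Hd _ h1]
    · have hchi : chi (φE.symm j) = s₀ := by
        rw [← Hpres (φE.symm j), Equiv.apply_symm_apply]; exact hj
      have hji : j = c * φE.symm j := by
        rw [← Hc _ hchi, Equiv.apply_symm_apply]
      have key : ω (ω j) = 1 + f * (φE.symm (ω j) - 1) := by
        rw [hω (ω j), Hf _ h3]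
      rw [← key, h0]; exact hji
    · have hji : φE (φE.symm j) = j := Equiv.apply_symm_apply _ _
      have hchi : chi (φE.symm j) = s₀ := by
        rw [← Hpres (φE.symm j), Equiv.apply_symm_apply]; exact hj
      rw [← Hc _ hchi, hji]; exact hj
    · have hchi2 : chi (φE.symm (ω j)) = s₂ := by
        rw [← Hpres (φE.symm (ω j)), Equiv.apply_symm_apply]; exact h2
      rw [← He _ hchi2, Equiv.apply_symm_apply]; exact h2
  · rintro ⟨i, i', h1, h2, S0, S1, S2, S3⟩
    have hci : chi i = s₀ := by rw [← hcm i]; exact S0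
    have hei : chi i' = s₂ := by rw [← hem i']; exact S2
    have hφi : φE i = c * i := Hc _ hci
    have hφi' : φE i' = e * i' := He _ hei
    have hsi : φE.symm (c * i) = i := by rw [← hφi, Equiv.symm_apply_apply]
    have hsi' : φE.symm (e * i') = i' := by rw [← hφi', Equiv.symm_apply_apply]
    have hωj : ω (c * i) = e * i' := by rw [hω, hsi, Hd _ S1, h1]
    have hωk : ω (e * i') = c * i := by rw [hω, hsi', Hf _ S3, h2]
    exact ⟨c * i, by rw [hωj, hωk], S0, by rw [hsi]; exact S1, by rw [hωj]; exact S2,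
      by rw [hωj, hsi']; exact S3⟩



lemma case1 (a b : F) (hb0 : b ≠ 0) (hd : a - b ≠ 0) :
    (∃ i i' : F, 1 + b * (i - 1) = b * i' ∧ 1 + a * (i' - 1) = b * i ∧
      chi (b * i) = -1 ∧ chi (i - 1) = -1 ∧ chi (b * i') = -1 ∧ chi (i' - 1) = 1) ↔
    (chi (2 * (b - 1) * (a - b)) = 1 ∧ chi ((2 * a * b - a - b) * (a - b)) = -1 ∧
      chi (b * (a + b) * (b - 1) * (a - b)) = -1 ∧ chi (b * (a + b - 2) * (a - b)) = -1) := by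
  have hD : b * (a - b) ≠ 0 := mul_ne_zero hb0 hd
  set I : F := (2 * a * b - a - b) / (b * (a - b)) with hI
  set I' : F := (a + b - 2) / (a - b) with hI'
  have E0 : chi (b * I) = chi ((2 * a * b - a - b) * (a - b)) := by
    rw [show b * I = (2 * a * b - a - b) / (a - b) by rw [hI]; field_simp; try ring,
      chi_div _ _ hd]
  have E1 : chi (I - 1) = chi (b * (a + b) * (b - 1) * (a - b)) := by
    rw [show I - 1 = ((b - 1) * (a + b)) / (b * (a - b)) by rw [hI]; field_simp; try ring,
      chi_div _ _ hD]
    congr 1; ring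
  have E2 : chi (b * I') = chi (b * (a + b - 2) * (a - b)) := by
    rw [show b * I' = (b * (a + b - 2)) / (a - b) by rw [hI']; field_simp; try ring,
      chi_div _ _ hd]
  have E3 : chi (I' - 1) = chi (2 * (b - 1) * (a - b)) := by
    rw [show I' - 1 = (2 * (b - 1)) / (a - b) by rw [hI']; field_simp; try ring,
      chi_div _ _ hd]
  constructor
  · rintro ⟨i, i', h1, h2, S0, S1, S2, S3⟩
    have hi : i = I := by rw [hI, eq_div_iff hD]; linear_combination a * h1 + b * h2
    have hi' : i' = I' := by rw [hI', eq_div_iff hd]; linear_combination h1 + h2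
    subst hi; subst hi'
    exact ⟨E3 ▸ S3, E0 ▸ S0, E1 ▸ S1, E2 ▸ S2⟩
  · rintro ⟨T1, T2, T3, T4⟩
    refine ⟨I, I', ?_, ?_, E0.symm ▸ T2, E1.symm ▸ T3, E2.symm ▸ T4, E3.symm ▸ T1⟩
    · rw [hI, hI']; field_simp; try ring
    · rw [hI, hI']; field_simp; try ring


lemma case2 (a b : F) (hb0 : b ≠ 0) (hd : a - b ≠ 0) :
    (∃ i i' : F, 1 + b * (i - 1) = a * i' ∧ 1 + b * (i' - 1) = b * i ∧
      chi (b * i) = -1 ∧ chi (i - 1) = -1 ∧ chi (a * i') = 1 ∧ chi (i' - 1) = -1) ↔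
    (chi (2 * a * (1 - b) * (a - b)) = 1 ∧ chi ((a + b) * (1 - b) * (a - b)) = -1 ∧
      chi (b * (a + b - 2 * a * b) * (a - b)) = -1 ∧ chi ((2 - a - b) * (a - b)) = -1) := by
  have hD : b * (a - b) ≠ 0 := mul_ne_zero hb0 hd
  set I : F := (a + b) * (1 - b) / (b * (a - b)) with hI
  set I' : F := 2 * (1 - b) / (a - b) with hI'
  have E0 : chi (b * I) = chi ((a + b) * (1 - b) * (a - b)) := by
    rw [show b * I = ((a + b) * (1 - b)) / (a - b) by rw [hI]; field_simp; try ring,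
      chi_div _ _ hd]
  have E1 : chi (I - 1) = chi (b * (a + b - 2 * a * b) * (a - b)) := by
    rw [show I - 1 = (a + b - 2 * a * b) / (b * (a - b)) by rw [hI]; field_simp; try ring,
      chi_div _ _ hD]
    congr 1; ring
  have E2 : chi (a * I') = chi (2 * a * (1 - b) * (a - b)) := by
    rw [show a * I' = (2 * a * (1 - b)) / (a - b) by rw [hI']; field_simp; try ring,
      chi_div _ _ hd]
  have E3 : chi (I' - 1) = chi ((2 - a - b) * (a - b)) := by
    rw [show I' - 1 = (2 - a - b) / (a - b) by rw [hI']; field_simp; try ring,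
      chi_div _ _ hd]
  constructor
  · rintro ⟨i, i', h1, h2, S0, S1, S2, S3⟩
    have hi : i = I := by
      rw [hI, eq_div_iff hD]; linear_combination (-b) * h1 - a * h2
    have hi' : i' = I' := by
      rw [hI', eq_div_iff hd]; linear_combination -h1 - h2
    subst hi; subst hi'
    exact ⟨E2 ▸ S2, E0 ▸ S0, E1 ▸ S1, E3 ▸ S3⟩
  · rintro ⟨T1, T2, T3, T4⟩
    refine ⟨I, I', ?_, ?_, E0.symm ▸ T2, E1.symm ▸ T3, E2.symm ▸ T1, E3.symm ▸ T4⟩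
    · rw [hI, hI']; field_simp; try ring
    · rw [hI, hI']; field_simp; try ring

lemma case3 (a b : F) (ha0 : a ≠ 0) (hd : a - b ≠ 0) :
    (∃ i i' : F, 1 + a * (i - 1) = a * i' ∧ 1 + a * (i' - 1) = b * i ∧
      chi (b * i) = -1 ∧ chi (i - 1) = 1 ∧ chi (a * i') = 1 ∧ chi (i' - 1) = 1) ↔
    (chi ((a + b - 2) * (a - b)) = 1 ∧ chi ((a - 1) * (a + b) * (a - b)) = 1 ∧
      chi (a * (2 * a * b - a - b) * (a - b)) = 1 ∧ chi (2 * b * (a - 1) * (a - b)) = -1) := by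
  have hD : a * (a - b) ≠ 0 := mul_ne_zero ha0 hd
  set I : F := 2 * (a - 1) / (a - b) with hI
  set I' : F := (a - 1) * (a + b) / (a * (a - b)) with hI'
  have E0 : chi (b * I) = chi (2 * b * (a - 1) * (a - b)) := by
    rw [show b * I = (2 * b * (a - 1)) / (a - b) by rw [hI]; field_simp; try ring,
      chi_div _ _ hd]
  have E1 : chi (I - 1) = chi ((a + b - 2) * (a - b)) := by
    rw [show I - 1 = (a + b - 2) / (a - b) by rw [hI]; field_simp; try ring,
      chi_div _ _ hd]
  have E2 : chi (a * I') = chi ((a - 1) * (a + b) * (a - b)) := by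
    rw [show a * I' = ((a - 1) * (a + b)) / (a - b) by rw [hI']; field_simp; try ring,
      chi_div _ _ hd]
  have E3 : chi (I' - 1) = chi (a * (2 * a * b - a - b) * (a - b)) := by
    rw [show I' - 1 = (2 * a * b - a - b) / (a * (a - b)) by rw [hI']; field_simp; try ring,
      chi_div _ _ hD]
    congr 1; ring
  constructor
  · rintro ⟨i, i', h1, h2, S0, S1, S2, S3⟩
    have hi : i = I := by
      rw [hI, eq_div_iff hd]; linear_combination h1 + h2
    have hi' : i' = I' := by
      rw [hI', eq_div_iff hD]; linear_combination b * h1 + a * h2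
    subst hi; subst hi'
    exact ⟨E1 ▸ S1, E2 ▸ S2, E3 ▸ S3, E0 ▸ S0⟩
  · rintro ⟨T1, T2, T3, T4⟩
    refine ⟨I, I', ?_, ?_, E0.symm ▸ T4, E1.symm ▸ T1, E2.symm ▸ T2, E3.symm ▸ T3⟩
    · rw [hI, hI']; field_simp; try ring
    · rw [hI, hI']; field_simp; try ring

lemma case4 (a b : F) (ha0 : a ≠ 0) (hd : a - b ≠ 0) :
    (∃ i i' : F, 1 + b * (i - 1) = a * i' ∧ 1 + a * (i' - 1) = a * i ∧
      chi (a * i) = 1 ∧ chi (i - 1) = -1 ∧ chi (a * i') = 1 ∧ chi (i' - 1) = 1) ↔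
    (chi (a * (2 - a - b) * (a - b)) = 1 ∧ chi ((a + b - 2 * a * b) * (a - b)) = 1 ∧
      chi (a * (1 - a) * (a + b) * (a - b)) = 1 ∧ chi (2 * (1 - a) * (a - b)) = -1) := by
  have hD : a * (a - b) ≠ 0 := mul_ne_zero ha0 hd
  set I : F := (2 - a - b) / (a - b) with hI
  set I' : F := (a + b - 2 * a * b) / (a * (a - b)) with hI'
  have E0 : chi (a * I) = chi (a * (2 - a - b) * (a - b)) := by
    rw [show a * I = (a * (2 - a - b)) / (a - b) by rw [hI]; field_simp; try ring,
      chi_div _ _ hd]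
  have E1 : chi (I - 1) = chi (2 * (1 - a) * (a - b)) := by
    rw [show I - 1 = (2 * (1 - a)) / (a - b) by rw [hI]; field_simp; try ring,
      chi_div _ _ hd]
  have E2 : chi (a * I') = chi ((a + b - 2 * a * b) * (a - b)) := by
    rw [show a * I' = (a + b - 2 * a * b) / (a - b) by rw [hI']; field_simp; try ring,
      chi_div _ _ hd]
  have E3 : chi (I' - 1) = chi (a * (1 - a) * (a + b) * (a - b)) := by
    rw [show I' - 1 = ((1 - a) * (a + b)) / (a * (a - b)) by rw [hI']; field_simp; try ring,
      chi_div _ _ hD]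
    congr 1; ring
  constructor
  · rintro ⟨i, i', h1, h2, S0, S1, S2, S3⟩
    have hi : i = I := by
      rw [hI, eq_div_iff hd]; linear_combination -h1 - h2
    have hi' : i' = I' := by
      rw [hI', eq_div_iff hD]; linear_combination (-a) * h1 - b * h2
    subst hi; subst hi'
    exact ⟨E0 ▸ S0, E2 ▸ S2, E3 ▸ S3, E1 ▸ S1⟩
  · rintro ⟨T1, T2, T3, T4⟩
    refine ⟨I, I', ?_, ?_, E0.symm ▸ T1, E1.symm ▸ T4, E2.symm ▸ T2, E3.symm ▸ T3⟩
    · rw [hI, hI']; field_simp; try ring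
    · rw [hI, hI']; field_simp; try ring

/-- Lemma 2.5: the sequences in `T₁` satisfied by `ω = ω[a,b]` when `a ∈ R_q`.
Here `φE` is the permutation of `F_q` given by `φ[a,b]` and `ω` is the permutation
`x ↦ 1 + φ(φ⁻¹(x) - 1)`. -/
theorem t1_satisfaction_a_square
    (hodd : Odd (Fintype.card F)) (a b : F) (hv : ValidPair a b) (hab : a ≠ b)
    (ha : inR a) (φE ω : Equiv.Perm F)
    (hφ : ∀ x : F, φE x = phi a b x)
    (hω : ∀ x : F, ω x = 1 + φE (φE.symm x - 1)) :
    (Satisfies ω φE (-1, -1, -1, 1) ↔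
      (inR (2 * (b - 1) * (a - b)) ∧ inN ((2 * a * b - a - b) * (a - b)) ∧
        inN (b * (a + b) * (b - 1) * (a - b)) ∧ inN (b * (a + b - 2) * (a - b)))) ∧
    (Satisfies ω φE (-1, -1, 1, -1) ↔
      (inR (2 * a * (1 - b) * (a - b)) ∧ inN ((a + b) * (1 - b) * (a - b)) ∧
        inN (b * (a + b - 2 * a * b) * (a - b)) ∧ inN ((2 - a - b) * (a - b)))) ∧
    (Satisfies ω φE (-1, 1, 1, 1) ↔
      (inR ((a + b - 2) * (a - b)) ∧ inR ((a - 1) * (a + b) * (a - b)) ∧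
        inR (a * (2 * a * b - a - b) * (a - b)) ∧ inN (2 * b * (a - 1) * (a - b)))) ∧
    (Satisfies ω φE (1, -1, 1, 1) ↔
      (inR (a * (2 - a - b) * (a - b)) ∧ inR ((a + b - 2 * a * b) * (a - b)) ∧
        inR (a * (1 - a) * (a + b) * (a - b)) ∧ inN (2 * (1 - a) * (a - b)))) := by
  have ha0 : a ≠ 0 := ha.1
  have hb0 : b ≠ 0 := by
    intro h; exact hv.1.1 (by rw [h, mul_zero])
  have hd : a - b ≠ 0 := sub_ne_zero_of_ne hab
  obtain ⟨s, hs⟩ := ha.2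
  have hs0 : s ≠ 0 := by intro h; exact ha0 (by rw [hs, h, mul_zero])
  obtain ⟨t, ht⟩ := hv.1.2
  have hbsq : IsSquare b := ⟨t/s, by field_simp; linear_combination ht - b * hs⟩
  have chia : chi a = 1 := chi_eq_one_iff.mpr ha
  have chib : chi b = 1 := chi_eq_one_iff.mpr ⟨hb0, hbsq⟩
  have hamul : ∀ x : F, chi (a * x) = chi x := fun x => by
    rw [show a * x = s^2 * x from by rw [hs]; ring, chi_sq_mul _ hs0]
  obtain ⟨u, hu⟩ := hbsq
  have hu0 : u ≠ 0 := by intro h; exact hb0 (by rw [hu, h, mul_zero])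
  have hbmul : ∀ x : F, chi (b * x) = chi x := fun x => by
    rw [show b * x = u^2 * x from by rw [hu]; ring, chi_sq_mul _ hu0]
  have Han : ∀ x : F, chi x = 1 → φE x = a * x := fun x hx => by
    rw [hφ, phi, if_pos (chi_eq_one_iff.mp hx)]
  have Hbn : ∀ x : F, chi x = -1 → φE x = b * x := fun x hx => by
    rw [hφ, phi]
    split_ifs with h
    · exact absurd ((chi_eq_one_iff.mpr h).symm.trans hx) (by norm_num)
    · rfl
  have Hpres : ∀ x : F, chi (φE x) = chi x := fun x => by
    rw [hφ, phi]; split_ifs with h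
    · exact hamul x
    · exact hbmul x
  refine ⟨?_, ?_, ?_, ?_⟩
  · rw [master φE ω hω Hpres (-1) (-1) (-1) 1 b b b a Hbn Hbn Hbn Han hbmul hbmul,
      case1 a b hb0 hd]
    simp only [chi_eq_one_iff, chi_eq_negone_iff]
  · rw [master φE ω hω Hpres (-1) (-1) 1 (-1) b b a b Hbn Hbn Han Hbn hbmul hamul,
      case2 a b hb0 hd]
    simp only [chi_eq_one_iff, chi_eq_negone_iff]
  · rw [master φE ω hω Hpres (-1) 1 1 1 b a a a Hbn Han Han Han hbmul hamul,
      case3 a b ha0 hd]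
    simp only [chi_eq_one_iff, chi_eq_negone_iff]
  · rw [master φE ω hω Hpres 1 (-1) 1 1 a b a a Han Hbn Han Han hamul hamul,
      case4 a b ha0 hd]
    simp only [chi_eq_one_iff, chi_eq_negone_iff]
end
end

section
/- Let q be an odd prime power, let (a,b) be a valid pair in F_q^2 with a ≠ b, and let ω = ω[a,b]. If the cycle of ω containing 0 is a transposition (i.e., ω(0) ≠ 0 and ω(ω(0)) = 0) or the cycle of ω containing a is a transposition (i.e., ω(a) ≠ a and ω(ω(a)) = a), then b ∈ {-a, 2-a, a/(2a-1)}. -/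
open scoped Classical
open Finset

noncomputable section

variable {F : Type*} [Field F] [Fintype F]

/-!
Both `φ` and `φ⁻¹` act on each element as multiplication or division by `a` or `b`, so
`ω(x) = 1 + e (x / d - 1)` with `d, e ∈ {a, b}`. Since `ω(0) = 1 - c` and `ω(a) = 1` with
`c ∈ {a, b}`, each transposition condition becomes an equation `y + z = z (x + y)` with
`x, y, z ∈ {a, b}`. Of its eight instances, two force `2a(1 - a) = 0` or `2b(1 - b) = 0`,
impossible for a valid pair in odd characteristic, and the other six are
`b = -a`, `b = 2 - a` or `b = a / (2a - 1)`.
-/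

section

variable {K : Type*} [Field K] {a b : K}

namespace ValidPair

theorem left_ne_zero (hv : ValidPair a b) : a ≠ 0 := left_ne_zero_of_mul hv.1.1

theorem right_ne_zero (hv : ValidPair a b) : b ≠ 0 := right_ne_zero_of_mul hv.1.1

theorem left_ne_one (hv : ValidPair a b) : a ≠ 1 :=
  sub_ne_zero.1 (left_ne_zero_of_mul hv.2.1)

theorem right_ne_one (hv : ValidPair a b) : b ≠ 1 :=
  sub_ne_zero.1 (right_ne_zero_of_mul hv.2.1)

theorem ne_zero_of_eq_or (hv : ValidPair a b) {d : K} (hd : d = a ∨ d = b) : d ≠ 0 := by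
  rcases hd with rfl | rfl
  exacts [hv.left_ne_zero, hv.right_ne_zero]

end ValidPair

theorem phi_zero (a b : K) : phi a b 0 = 0 := by
  simp [phi]

theorem phi_one (a b : K) : phi a b 1 = a := by
  simp [phi, inR]

theorem exists_phi_eq_mul (a b x : K) : ∃ d, (d = a ∨ d = b) ∧ phi a b x = d * x := by
  unfold phi
  split_ifs
  exacts [⟨a, .inl rfl, rfl⟩, ⟨b, .inr rfl, rfl⟩]

theorem exists_symm_eq_div (hv : ValidPair a b) {φE : Equiv.Perm K}
    (hφ : ∀ x, φE x = phi a b x) (y : K) : ∃ d, (d = a ∨ d = b) ∧ φE.symm y = y / d := by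
  obtain ⟨d, hd, hmul⟩ := exists_phi_eq_mul a b (φE.symm y)
  refine ⟨d, hd, eq_div_of_mul_eq (hv.ne_zero_of_eq_or hd) ?_⟩
  rw [mul_comm, ← hmul, ← hφ, Equiv.apply_symm_apply]

theorem exists_omega_eq (hv : ValidPair a b) {φE ω : Equiv.Perm K}
    (hφ : ∀ x, φE x = phi a b x) (hω : ∀ x, ω x = 1 + φE (φE.symm x - 1)) (y : K) :
    ∃ d e, (d = a ∨ d = b) ∧ (e = a ∨ e = b) ∧ d ≠ 0 ∧ ω y = 1 + e * (y / d - 1) := by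
  obtain ⟨d, hd, hdiv⟩ := exists_symm_eq_div hv hφ y
  obtain ⟨e, he, hmul⟩ := exists_phi_eq_mul a b (y / d - 1)
  exact ⟨d, e, hd, he, hv.ne_zero_of_eq_or hd, by rw [hω, hdiv, hφ, hmul]⟩

theorem eq_neg_or_two_sub_or_div_of_add_eq_mul_add (hv : ValidPair a b) (h2 : (2 : K) ≠ 0) {x y z : K}
    (hx : x = a ∨ x = b) (hy : y = a ∨ y = b) (hz : z = a ∨ z = b)
    (H : y + z = z * (x + y)) :
    b = -a ∨ b = 2 - a ∨ b = a / (2 * a - 1) := by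
  have ha := hv.left_ne_zero
  have hb := hv.right_ne_zero
  have ha1 := sub_ne_zero.2 hv.left_ne_one.symm
  have hb1 := sub_ne_zero.2 hv.right_ne_one.symm
  have neg_of {t : K} (ht : 1 - t ≠ 0) (h : (b + a) * (1 - t) = 0) : b = -a :=
    eq_neg_of_add_eq_zero_left ((mul_eq_zero.1 h).resolve_right ht)
  have two_sub_of {t : K} (ht : t ≠ 0) (h : t * (2 - a - b) = 0) : b = 2 - a := by
    linear_combination -(mul_eq_zero.1 h).resolve_left ht
  have div_of (h : a + b = 2 * a * b) : b = a / (2 * a - 1) := by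
    have h2a : 2 * a - 1 ≠ 0 := fun h0 => ha (by linear_combination h + b * h0)
    rw [eq_div_iff h2a]
    linear_combination -h
  rcases hx with rfl | rfl <;> rcases hy with rfl | rfl <;> rcases hz with rfl | rfl
  · exact absurd (by linear_combination H) (mul_ne_zero (mul_ne_zero h2 ha) ha1)
  · exact .inr (.inr (div_of (by linear_combination H)))
  · exact .inl (neg_of ha1 (by linear_combination H))
  · exact .inr (.inl (two_sub_of hb (by linear_combination H)))
  · exact .inr (.inl (two_sub_of ha (by linear_combination H)))
  · exact .inl (neg_of hb1 (by linear_combination H))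
  · exact .inr (.inr (div_of (by linear_combination H)))
  · exact absurd (by linear_combination H) (mul_ne_zero (mul_ne_zero h2 hb) hb1)

end

theorem two_ne_zero_of_odd_card {F : Type*} [Field F] [Fintype F]
    (hodd : Odd (Fintype.card F)) : (2 : F) ≠ 0 :=
  Ring.two_ne_zero fun hc => by
    have := FiniteField.even_card_of_char_two hc
    rw [Nat.odd_iff] at hodd
    omega

theorem transposition_at_zero_or_a_general
    (hodd : Odd (Fintype.card F)) (a b : F) (hv : ValidPair a b)
    (φE ω : Equiv.Perm F)
    (hφ : ∀ x : F, φE x = phi a b x)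
    (hω : ∀ x : F, ω x = 1 + φE (φE.symm x - 1))
    (h : (ω 0 ≠ 0 ∧ ω (ω 0) = 0) ∨ (ω a ≠ a ∧ ω (ω a) = a)) :
    b = -a ∨ b = 2 - a ∨ b = a / (2 * a - 1) := by
  have h2 := two_ne_zero_of_odd_card hodd
  rcases h with ⟨-, hcycle⟩ | ⟨-, hcycle⟩
  · obtain ⟨_, c, -, hc, -, hω0⟩ := exists_omega_eq hv hφ hω 0
    obtain ⟨d, e, hd, he, hd0, hω1⟩ := exists_omega_eq hv hφ hω (ω 0)
    rw [hω1, hω0, zero_div] at hcycle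
    field_simp at hcycle
    exact eq_neg_or_two_sub_or_div_of_add_eq_mul_add hv h2 hc hd he (by linear_combination hcycle)
  · have hωa : ω a = 1 := by
      rw [hω, ← phi_one a b, ← hφ, Equiv.symm_apply_apply, sub_self, hφ, phi_zero, add_zero]
    obtain ⟨d, e, hd, he, hd0, hω1⟩ := exists_omega_eq hv hφ hω 1
    rw [hωa, hω1] at hcycle
    field_simp at hcycle
    exact eq_neg_or_two_sub_or_div_of_add_eq_mul_add hv h2 (.inl rfl) he hd (by linear_combination hcycle)

/-- Lemma 2.11: if the cycle of `ω = ω[a,b]` containing `0` or the cycle containing `a`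
is a transposition, then `b ∈ {-a, 2-a, a/(2a-1)}`. -/
theorem transposition_at_zero_or_a
    (hodd : Odd (Fintype.card F)) (a b : F) (hv : ValidPair a b) (hab : a ≠ b)
    (φE ω : Equiv.Perm F)
    (hφ : ∀ x : F, φE x = phi a b x)
    (hω : ∀ x : F, ω x = 1 + φE (φE.symm x - 1))
    (h : (ω 0 ≠ 0 ∧ ω (ω 0) = 0) ∨ (ω a ≠ a ∧ ω (ω a) = a)) :
    b = -a ∨ b = 2 - a ∨ b = a / (2 * a - 1) :=
  transposition_at_zero_or_a_general hodd a b hv φE ω hφ hω h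
end
end

section
/- Let q > 23 be an odd prime power and let (a,b) be a valid pair in F_q^2 with a ≠ b. If (α,β,γ) is an autotopism of Q_{a,b} such that each of α, β, γ is an affine permutation of F_q (i.e., of the form x ↦ ψ(x)+c for some additive bijection ψ of F_q and some c ∈ F_q), then α = β = γ. -/
open scoped Classical
open Finset

noncomputable section

variable {F : Type*} [Field F] [Fintype F]

/-- `(α, β, γ)` is an autotopism of the quadratic quasigroup `Q_{a,b}`. -/
def IsAutotopism (a b : F) (α β γ : Equiv.Perm F) : Prop :=
  ∀ x y : F, qmul a b (α x) (β y) = γ (qmul a b x y)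

/-- `Atp_i(Q_{a,b})`: the projection of the autotopism group of `Q_{a,b}` onto its
`i`-th coordinate (for `i : Fin 3`). -/
def AtpProj (a b : F) (i : Fin 3) : Set (Equiv.Perm F) :=
  {δ | ∃ α β γ : Equiv.Perm F, IsAutotopism a b α β γ ∧ δ = ![α, β, γ] i}

/-- A permutation of `F_q` is affine (an element of `AGL_d(p)`) if it has the form
`x ↦ ψ(x) + c` for an additive bijection `ψ` and a constant `c`. -/
def IsAffinePerm (f : Equiv.Perm F) : Prop :=
  ∃ (ψ : F ≃+ F) (c : F), ∀ x : F, f x = ψ x + c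

/-- A set of permutations of `F_q` is 2-transitive. -/
def TwoTransitive (G : Set (Equiv.Perm F)) : Prop :=
  ∀ x₁ y₁ x₂ y₂ : F, x₁ ≠ y₁ → x₂ ≠ y₂ → ∃ g ∈ G, g x₁ = x₂ ∧ g y₁ = y₂

/-! Write `x * y = x + f (y - x)`, where `f t` is `a t` or `b t` according to the square class
of `t`, and let `α, β, γ = ψᵢ + cᵢ`. Comparing the autotopism identity at two points shows that,
unless `ψ₂ = ψ₁`, there is `d ≠ 0` for which `u ↦ f (u + d) - f u` is constant; as `a ≠ b`, this
puts every nonzero `u` into the square class of `d`, which is absurd. Then `ψ₃ = ψ₁ =: ψ` as well,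
and `s = c₂ - c₁` satisfies `f (s + ψ t) - f s = ψ (f t)`. Adding this at `t` and `-t`, and
evaluating where `x = s + ψ t` and `2s - x` lie in a common square class, gives `2 (a - b) s = 0`
if `-1` is a square. Otherwise `t ↦ f t + f (-t)` is injective up to sign, so at most two `x`
have both `x` and `2s - x` nonzero squares, whereas a Jacobi sum shows there are at least
`(q - 5) / 4` of them. -/

section AnyField

variable {K : Type*} [Field K]

def qcoeff (a b t : K) : K := if IsSquare t then a else b

def qscale (a b t : K) : K := qcoeff a b t * t

@[simp]
lemma qscale_zero (a b : K) : qscale a b 0 = 0 := mul_zero _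

lemma qcoeff_eq_qcoeff_iff {a b : K} (hab : a ≠ b) {t t' : K} :
    qcoeff a b t = qcoeff a b t' ↔ (IsSquare t ↔ IsSquare t') := by
  unfold qcoeff
  split_ifs <;> simp_all [hab.symm]

lemma qcoeff_eq_of_ne_of_ne {a b t t' d : K} (ht : qcoeff a b t ≠ qcoeff a b d)
    (ht' : qcoeff a b t' ≠ qcoeff a b d) : qcoeff a b t = qcoeff a b t' := by
  unfold qcoeff at *
  split_ifs at * <;> simp_all

lemma isSquare_iff_of_forall_qscale_add_sub_eq {a b d : K} (hab : a ≠ b) (hd : d ≠ 0)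
    (h : ∀ u, qscale a b (u + d) - qscale a b u = qscale a b d) {u : K} (hu : u ≠ 0) :
    IsSquare u ↔ IsSquare d := by
  rw [← qcoeff_eq_qcoeff_iff hab]
  by_contra hne
  have key : (qcoeff a b (u + d) - qcoeff a b d) * (u + d) = (qcoeff a b u - qcoeff a b d) * u := by
    have := h u
    unfold qscale at this
    linear_combination this
  have hne' : qcoeff a b (u + d) ≠ qcoeff a b d := by
    intro h'
    rw [h', sub_self, zero_mul] at key
    exact mul_ne_zero (sub_ne_zero.2 hne) hu key.symm
  rw [qcoeff_eq_of_ne_of_ne hne' hne] at key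
  have := mul_left_cancel₀ (sub_ne_zero.2 hne) key
  exact hd (by linear_combination this)

lemma qscale_neg_of_isSquare_neg_one (h : IsSquare (-1 : K)) (a b t : K) :
    qscale a b (-t) = -qscale a b t := by
  have : IsSquare (-t) ↔ IsSquare t :=
    ⟨fun h' => by simpa using h.mul h', fun h' => by simpa using h.mul h'⟩
  simp only [qscale, qcoeff, this, mul_neg]

lemma map_qscale_add_qscale_neg_eq {a b s x m : K} {ψ : K ≃+ K}
    (h : ∀ t, qscale a b (s + ψ t) - qscale a b s = ψ (qscale a b t))
    (hx : qcoeff a b x = m) (hx' : qcoeff a b (2 * s - x) = m) :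
    ψ (qscale a b (ψ.symm (x - s)) + qscale a b (-ψ.symm (x - s)))
      = 2 * m * s - 2 * qscale a b s := by
  have e₁ := h (ψ.symm (x - s))
  have e₂ := h (-ψ.symm (x - s))
  rw [ψ.apply_symm_apply, add_sub_cancel] at e₁
  rw [map_neg, ψ.apply_symm_apply, show s + -(x - s) = 2 * s - x by ring] at e₂
  rw [map_add, ← e₁, ← e₂]
  unfold qscale at *
  rw [hx, hx']
  ring

end AnyField

lemma qmul_eq_add_qscale (a b x y : F) : qmul a b x y = x + qscale a b (y - x) := by
  unfold qmul qscale qcoeff inR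
  split_ifs <;> simp_all

lemma ringChar_ne_two_of_odd_card (h : Odd (Fintype.card F)) : ringChar F ≠ 2 := fun h2 => by
  have := FiniteField.even_card_of_char_two h2
  rw [Nat.odd_iff] at h
  omega

lemma isSquare_neg_iff_of_not_isSquare_neg_one (h : ¬IsSquare (-1 : F)) {t : F} (ht : t ≠ 0) :
    IsSquare (-t) ↔ ¬IsSquare t := by
  rw [← quadraticChar_neg_one_iff_not_isSquare] at h ⊢
  rw [← quadraticChar_one_iff_isSquare (neg_ne_zero.2 ht), neg_eq_neg_one_mul, map_mul, h,
    neg_one_mul, neg_eq_iff_eq_neg]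

lemma qscale_add_qscale_neg_of_not_isSquare_neg_one (h : ¬IsSquare (-1 : F)) (a b t : F) :
    qscale a b t + qscale a b (-t) = (a - b) * if IsSquare t then t else -t := by
  rcases eq_or_ne t 0 with rfl | ht
  · simp
  have := isSquare_neg_iff_of_not_isSquare_neg_one h ht
  by_cases hsq : IsSquare t <;> simp [qscale, qcoeff, hsq, this] <;> ring

lemma eq_or_eq_neg_of_qscale_add_qscale_neg_eq {a b : F} (hab : a ≠ b) (h : ¬IsSquare (-1 : F))
    {t t' : F} (heq : qscale a b t + qscale a b (-t) = qscale a b t' + qscale a b (-t')) :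
    t' = t ∨ t' = -t := by
  rw [qscale_add_qscale_neg_of_not_isSquare_neg_one h,
    qscale_add_qscale_neg_of_not_isSquare_neg_one h] at heq
  have := mul_left_cancel₀ (sub_ne_zero.2 hab) heq
  split_ifs at this
  · exact Or.inl this.symm
  · exact Or.inr (by linear_combination this)
  · exact Or.inr (by linear_combination -this)
  · exact Or.inl (by linear_combination this)

lemma eq_of_forall_qscale_add_sub_eq (hF : ringChar F ≠ 2) {a b : F} (hab : a ≠ b) {s₁ s₂ : F}
    (h : ∀ w, qscale a b (s₁ + w) - qscale a b s₁ = qscale a b (s₂ + w) - qscale a b s₂) :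
    s₁ = s₂ := by
  by_contra hne
  have hd : s₂ - s₁ ≠ 0 := sub_ne_zero.2 (Ne.symm hne)
  have hper : ∀ u, qscale a b (u + (s₂ - s₁)) - qscale a b u = qscale a b (s₂ - s₁) := by
    have hw : ∀ u, qscale a b (u + (s₂ - s₁)) - qscale a b u = qscale a b s₂ - qscale a b s₁ :=
      fun u => by
        have := h (u - s₁)
        rw [add_sub_cancel, show s₂ + (u - s₁) = u + (s₂ - s₁) by ring] at this
        linear_combination -this
    intro u
    rw [hw, ← hw 0, zero_add, qscale_zero, sub_zero]
  obtain ⟨g, hg⟩ := FiniteField.exists_nonsquare hF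
  have hg0 : g ≠ 0 := by rintro rfl; exact hg IsSquare.zero
  exact hg ((isSquare_iff_of_forall_qscale_add_sub_eq hab hd hper hg0).2
    ((isSquare_iff_of_forall_qscale_add_sub_eq hab hd hper one_ne_zero).1 IsSquare.one))

lemma sum_quadraticChar_mul_quadraticChar_sub (hF : ringChar F ≠ 2) {c : F} (hc : c ≠ 0) :
    ∑ x : F, quadraticChar F x * quadraticChar F (c - x) = -quadraticChar F (-1) := by
  have hJ := jacobiSum_nontrivial_inv (quadraticChar_ne_one hF)
  rw [(quadraticChar_isQuadratic F).inv, jacobiSum] at hJ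
  rw [← hJ]
  refine (Fintype.sum_equiv (Equiv.mulLeft₀ c hc) _ _ fun y => ?_).symm
  change _ = quadraticChar F (c * y) * quadraticChar F (c - c * y)
  rw [show c - c * y = c * (1 - y) by ring, map_mul, map_mul]
  linear_combination (-(quadraticChar F y * quadraticChar F (1 - y))) * quadraticChar_sq_one hc

def quadCharPairs (c : F) (ε : ℤ) : Finset F :=
  univ.filter fun x => quadraticChar F x = ε ∧ quadraticChar F (c - x) = ε

lemma mem_quadCharPairs {c x : F} {ε : ℤ} :
    x ∈ quadCharPairs c ε ↔ quadraticChar F x = ε ∧ quadraticChar F (c - x) = ε := by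
  simp [quadCharPairs]

lemma card_le_four_mul_card_quadCharPairs_add_five (hF : ringChar F ≠ 2) {c : F} (hc : c ≠ 0)
    {ε : ℤ} (hε : ε = 1 ∨ ε = -1) :
    Fintype.card F ≤ 4 * (quadCharPairs c ε).card + 5 := by
  have hsum : ∑ x : F, (1 + ε * quadraticChar F x) * (1 + ε * quadraticChar F (c - x))
      = Fintype.card F - quadraticChar F (-1) := by
    have hε2 : ε * ε = 1 := by rcases hε with rfl | rfl <;> norm_num
    have hshift : ∑ x : F, quadraticChar F (c - x) = 0 := by
      rw [← quadraticChar_sum_zero hF]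
      exact Fintype.sum_equiv (Equiv.subLeft c) _ _ fun _ => rfl
    simp only [add_mul, mul_add, one_mul, mul_one, Finset.sum_add_distrib, ← Finset.mul_sum,
      mul_mul_mul_comm, hε2, hshift]
    rw [quadraticChar_sum_zero hF, sum_quadraticChar_mul_quadraticChar_sub hF hc]
    simp only [Finset.sum_const, Finset.card_univ, nsmul_eq_mul, mul_one, mul_zero, add_zero]
    ring
  have hbound : ∀ x : F, (1 + ε * quadraticChar F x) * (1 + ε * quadraticChar F (c - x)) ≤
      4 * (if quadraticChar F x = ε ∧ quadraticChar F (c - x) = ε then 1 else 0)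
        + (if x = 0 then 2 else 0) + (if x = c then 2 else 0) := by
    intro x
    have tri : ∀ y : F,
        quadraticChar F y = 0 ∨ quadraticChar F y = 1 ∨ quadraticChar F y = -1 := by
      intro y
      rcases eq_or_ne y 0 with rfl | hy
      · exact Or.inl quadraticChar_zero
      · exact Or.inr (quadraticChar_dichotomy hy)
    have hxc : x = c ↔ quadraticChar F (c - x) = 0 := by
      rw [quadraticChar_eq_zero_iff, sub_eq_zero, eq_comm]
    rw [hxc, ← quadraticChar_eq_zero_iff]
    rcases tri x with h₁ | h₁ | h₁ <;> rcases tri (c - x) with h₂ | h₂ | h₂ <;>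
      rcases hε with rfl | rfl <;> simp [h₁, h₂]
  have := Finset.sum_le_sum fun x (_ : x ∈ univ) => hbound x
  simp only [Finset.sum_add_distrib, ← Finset.mul_sum, Finset.sum_boole, Finset.sum_ite_eq',
    Finset.mem_univ, if_true, hsum] at this
  rw [quadCharPairs]
  have := quadraticChar_dichotomy (F := F) (neg_ne_zero.2 one_ne_zero)
  omega

lemma qcoeff_of_quadraticChar_eq_one {a b t : F} (h : quadraticChar F t = 1) :
    qcoeff a b t = a :=
  if_pos ((quadraticChar_one_iff_isSquare fun ht => by simp [ht] at h).1 h)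

lemma qcoeff_of_quadraticChar_eq_neg_one {a b t : F} (h : quadraticChar F t = -1) :
    qcoeff a b t = b :=
  if_neg (quadraticChar_neg_one_iff_not_isSquare.1 h)

lemma card_quadCharPairs_le_two {a b s : F} {ψ : F ≃+ F} (hab : a ≠ b)
    (hm : ¬IsSquare (-1 : F)) (h : ∀ t, qscale a b (s + ψ t) - qscale a b s = ψ (qscale a b t)) :
    (quadCharPairs (2 * s) 1).card ≤ 2 := by
  rcases (quadCharPairs (2 * s) 1).eq_empty_or_nonempty with he | ⟨x₀, hx₀⟩
  · simp [he]
  refine (Finset.card_le_card fun x hx => ?_).trans (Finset.card_le_two (a := x₀) (b := 2 * s - x₀))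
  rw [mem_quadCharPairs] at hx hx₀
  have e := map_qscale_add_qscale_neg_eq h (qcoeff_of_quadraticChar_eq_one hx.1)
    (qcoeff_of_quadraticChar_eq_one hx.2)
  have e₀ := map_qscale_add_qscale_neg_eq h (qcoeff_of_quadraticChar_eq_one hx₀.1)
    (qcoeff_of_quadraticChar_eq_one hx₀.2)
  rw [Finset.mem_insert, Finset.mem_singleton]
  rcases eq_or_eq_neg_of_qscale_add_qscale_neg_eq hab hm (ψ.injective (e₀.trans e.symm))
    with h' | h'
  · left
    linear_combination ψ.symm.injective h'
  · right
    rw [← map_neg] at h'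
    linear_combination ψ.symm.injective h'

lemma eq_zero_of_forall_qscale_add_map_sub_eq (hF : ringChar F ≠ 2) (hq : 13 < Fintype.card F)
    {a b : F} (hab : a ≠ b) (ψ : F ≃+ F) {s : F}
    (h : ∀ t, qscale a b (s + ψ t) - qscale a b s = ψ (qscale a b t)) : s = 0 := by
  by_contra hs
  have h2s : 2 * s ≠ 0 := mul_ne_zero (Ring.two_ne_zero hF) hs
  have hP : ∀ ε : ℤ, (ε = 1 ∨ ε = -1) → 3 ≤ (quadCharPairs (2 * s) ε).card := fun ε hε => by
    have := card_le_four_mul_card_quadCharPairs_add_five hF h2s hε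
    omega
  by_cases hm : IsSquare (-1 : F)
  · obtain ⟨x, hx⟩ := (quadCharPairs (2 * s) 1).card_pos.1 (by have := hP 1 (Or.inl rfl); omega)
    obtain ⟨y, hy⟩ := (quadCharPairs (2 * s) (-1)).card_pos.1
      (by have := hP (-1) (Or.inr rfl); omega)
    rw [mem_quadCharPairs] at hx hy
    have ex := map_qscale_add_qscale_neg_eq h (qcoeff_of_quadraticChar_eq_one hx.1)
      (qcoeff_of_quadraticChar_eq_one hx.2)
    have ey := map_qscale_add_qscale_neg_eq h (qcoeff_of_quadraticChar_eq_neg_one hy.1)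
      (qcoeff_of_quadraticChar_eq_neg_one hy.2)
    simp only [qscale_neg_of_isSquare_neg_one hm, add_neg_cancel, map_zero] at ex ey
    exact mul_ne_zero h2s (sub_ne_zero.2 hab) (by linear_combination ey - ex)
  · have := hP 1 (Or.inl rfl)
    have := card_quadCharPairs_le_two hab hm h
    omega

lemma IsAutotopism.qscale_eq {a b : F} {α β γ : Equiv.Perm F} (h : IsAutotopism a b α β γ)
    {ψ₁ ψ₂ ψ₃ : F ≃+ F} {c₁ c₂ c₃ : F} (hα : ∀ x, α x = ψ₁ x + c₁) (hβ : ∀ x, β x = ψ₂ x + c₂)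
    (hγ : ∀ x, γ x = ψ₃ x + c₃) (x t : F) :
    qscale a b (ψ₂ x - ψ₁ x + (c₂ - c₁) + ψ₂ t)
      = ψ₃ x - ψ₁ x + (c₃ - c₁) + ψ₃ (qscale a b t) := by
  have := h x (x + t)
  rw [qmul_eq_add_qscale, qmul_eq_add_qscale, hα, hβ, hγ, add_sub_cancel_left, map_add,
    map_add] at this
  rw [show ψ₂ x - ψ₁ x + (c₂ - c₁) + ψ₂ t = ψ₂ x + ψ₂ t + c₂ - (ψ₁ x + c₁) by ring]
  linear_combination this

lemma eq_and_eq_of_forall_qscale_map_sub_map (hF : ringChar F ≠ 2) {a b : F} (hab : a ≠ b)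
    {ψ₁ ψ₂ ψ₃ : F ≃+ F} {s k : F}
    (h : ∀ x t, qscale a b (ψ₂ x - ψ₁ x + s + ψ₂ t) = ψ₃ x - ψ₁ x + k + ψ₃ (qscale a b t)) :
    ψ₂ = ψ₁ ∧ ψ₃ = ψ₁ := by
  have h₀ : ∀ x, qscale a b (ψ₂ x - ψ₁ x + s) = ψ₃ x - ψ₁ x + k := fun x => by
    simpa using h x 0
  have hk : qscale a b s = k := by simpa using h₀ 0
  obtain rfl : ψ₂ = ψ₁ := AddEquiv.ext fun x => by
    have := eq_of_forall_qscale_add_sub_eq hF hab (s₁ := ψ₂ x - ψ₁ x + s) (s₂ := s) fun w => by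
      have e := h x (ψ₂.symm w)
      have e₀ := h 0 (ψ₂.symm w)
      simp only [AddEquiv.apply_symm_apply, map_zero, sub_zero, zero_add] at e e₀
      linear_combination e - h₀ x - e₀ + hk
    linear_combination this
  refine ⟨rfl, AddEquiv.ext fun x => ?_⟩
  have := h₀ x
  rw [sub_self, zero_add, hk] at this
  linear_combination -this

theorem affine_autotopism_is_automorphism_general
    (hodd : Odd (Fintype.card F)) (hq : 23 < Fintype.card F)
    (a b : F) (hab : a ≠ b)
    (α β γ : Equiv.Perm F) (hatp : IsAutotopism a b α β γ)
    (hα : IsAffinePerm α) (hβ : IsAffinePerm β) (hγ : IsAffinePerm γ) :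
    α = β ∧ β = γ := by
  obtain ⟨ψ, c₁, hα⟩ := hα
  obtain ⟨ψ₂, c₂, hβ⟩ := hβ
  obtain ⟨ψ₃, c₃, hγ⟩ := hγ
  have hF := ringChar_ne_two_of_odd_card hodd
  have key := hatp.qscale_eq hα hβ hγ
  obtain ⟨h₂, h₃⟩ := eq_and_eq_of_forall_qscale_map_sub_map hF hab key
  subst ψ₂ ψ₃
  simp only [sub_self, zero_add] at key
  have hk : qscale a b (c₂ - c₁) = c₃ - c₁ := by simpa using key 0 0
  have hs : c₂ - c₁ = 0 := eq_zero_of_forall_qscale_add_map_sub_eq hF (by omega) hab ψ fun t => by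
    rw [key 0 t, hk]
    ring
  rw [hs, qscale_zero] at hk
  refine ⟨Equiv.ext fun x => ?_, Equiv.ext fun x => ?_⟩
  · rw [hα, hβ]
    linear_combination -hs
  · rw [hβ, hγ]
    linear_combination hs + hk

/-- Lemma 3.1: if `q > 23` and `(α,β,γ)` is an autotopism of `Q_{a,b}` (with `a ≠ b`)
whose components are all affine permutations, then `α = β = γ`. -/
theorem affine_autotopism_is_automorphism
    (hodd : Odd (Fintype.card F)) (hq : 23 < Fintype.card F)
    (a b : F) (hv : ValidPair a b) (hab : a ≠ b)
    (α β γ : Equiv.Perm F) (hatp : IsAutotopism a b α β γ)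
    (hα : IsAffinePerm α) (hβ : IsAffinePerm β) (hγ : IsAffinePerm γ) :
    α = β ∧ β = γ :=
  affine_autotopism_is_automorphism_general hodd hq a b hab α β γ hatp hα hβ hγ
end
end

section
/- Let q be an odd prime power, let (a,b) be a valid pair in F_q^2, and let i ∈ {1,2,3}. If there exists δ ∈ Atp_i(Q_{a,b}) satisfying δ(0) = 0 and δ(1) ∈ N_q, then Atp_i(Q_{a,b}) is 2-transitive. -/
open scoped Classical
open Finset

noncomputable section

variable {F : Type*} [Field F] [Fintype F]

/-! ### Auxiliary lemmas -/

/-- Multiplying by a nonzero square preserves squareness. -/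
lemma aux_isSquare_mul_left {r t : F} (hr : IsSquare r) (hr0 : r ≠ 0) :
    IsSquare (r * t) ↔ IsSquare t := by
  constructor
  · intro h
    have : t = r⁻¹ * (r * t) := by field_simp
    rw [this]
    exact (hr.inv).mul h
  · exact fun h => hr.mul h

lemma aux_inR_mul_left {r t : F} (hr : IsSquare r) (hr0 : r ≠ 0) :
    inR (r * t) ↔ inR t := by
  unfold inR
  rw [aux_isSquare_mul_left hr hr0, mul_ne_zero_iff]
  tauto

/-- In a finite field the product of two nonsquares is a square. -/
lemma aux_nonsquare_mul_nonsquare {m n : F} (hm0 : m ≠ 0) (hm : ¬ IsSquare m)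
    (hn0 : n ≠ 0) (hn : ¬ IsSquare n) : IsSquare (m * n) := by
  have hχm : quadraticChar F m = -1 := quadraticChar_neg_one_iff_not_isSquare.mpr hm
  have hχn : quadraticChar F n = -1 := quadraticChar_neg_one_iff_not_isSquare.mpr hn
  have : quadraticChar F (m * n) = 1 := by rw [map_mul, hχm, hχn]; ring
  exact (quadraticChar_one_iff_isSquare (mul_ne_zero hm0 hn0)).mp this

/-- The affine permutation `x ↦ r x + c` for `r ≠ 0`. -/
def affinePerm (r : F) (hr : r ≠ 0) (c : F) : Equiv.Perm F :=
  (Equiv.mulLeft₀ r hr).trans (Equiv.addRight c)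

lemma affinePerm_apply (r : F) (hr : r ≠ 0) (c x : F) :
    affinePerm r hr c x = r * x + c := rfl

/-- For `r` a nonzero square, the triple of three copies of `x ↦ r x + c` is an
autotopism of `Q_{a,b}`. -/
lemma diag_autotopism (a b : F) {r : F} (hr : inR r) (c : F) :
    IsAutotopism a b (affinePerm r hr.1 c) (affinePerm r hr.1 c) (affinePerm r hr.1 c) := by
  intro x y
  have hsub : affinePerm r hr.1 c y - affinePerm r hr.1 c x = r * (y - x) := by
    simp only [affinePerm_apply]; ring
  have hiff : inR (affinePerm r hr.1 c y - affinePerm r hr.1 c x) ↔ inR (y - x) := by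
    rw [hsub]; exact aux_inR_mul_left hr.2 hr.1
  unfold qmul
  by_cases h : inR (y - x)
  · rw [if_pos (hiff.mpr h), if_pos h, hsub]
    simp only [affinePerm_apply]; ring
  · rw [if_neg (fun hh => h (hiff.mp hh)), if_neg h, hsub]
    simp only [affinePerm_apply]; ring

/-- `AtpProj` contains the affine maps with square multiplier. -/
lemma atpProj_affine (a b : F) (i : Fin 3) {r : F} (hr : inR r) (c : F) :
    affinePerm r hr.1 c ∈ AtpProj a b i := by
  refine ⟨_, _, _, diag_autotopism a b hr c, ?_⟩
  fin_cases i <;> rfl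

/-- `AtpProj` is closed under composition. -/
lemma atpProj_mul {a b : F} {i : Fin 3} {δ₁ δ₂ : Equiv.Perm F}
    (h1 : δ₁ ∈ AtpProj a b i) (h2 : δ₂ ∈ AtpProj a b i) : δ₁ * δ₂ ∈ AtpProj a b i := by
  obtain ⟨α₁, β₁, γ₁, hA1, hδ1⟩ := h1
  obtain ⟨α₂, β₂, γ₂, hA2, hδ2⟩ := h2
  refine ⟨α₁ * α₂, β₁ * β₂, γ₁ * γ₂, ?_, ?_⟩
  · intro x y
    simp only [Equiv.Perm.mul_apply]
    rw [hA1 (α₂ x) (β₂ y), hA2 x y]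
  · fin_cases i <;> simp_all
    all_goals rfl

lemma perm_apply_inv_self (e : Equiv.Perm F) (x : F) : e (e⁻¹ x) = x := e.apply_symm_apply x

lemma perm_inv_apply_self (e : Equiv.Perm F) (x : F) : e⁻¹ (e x) = x := e.symm_apply_apply x

/-- `AtpProj` is closed under inverses. -/
lemma atpProj_inv {a b : F} {i : Fin 3} {δ : Equiv.Perm F}
    (h : δ ∈ AtpProj a b i) : δ⁻¹ ∈ AtpProj a b i := by
  obtain ⟨α, β, γ, hA, hδ⟩ := h
  refine ⟨α⁻¹, β⁻¹, γ⁻¹, ?_, ?_⟩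
  · intro x y
    have := hA (α⁻¹ x) (β⁻¹ y)
    simp only [perm_apply_inv_self] at this
    rw [this, perm_inv_apply_self]
  · fin_cases i <;> simp_all
    all_goals rfl

/-- Lemma 4.2: if some `δ ∈ Atp_i(Q_{a,b})` satisfies `δ(0) = 0` and `δ(1) ∈ N_q`, then
`Atp_i(Q_{a,b})` is 2-transitive. -/
theorem atp_proj_two_transitive_of_nonsquare
    (hodd : Odd (Fintype.card F)) (a b : F) (hv : ValidPair a b) (i : Fin 3)
    (δ : Equiv.Perm F) (hδ : δ ∈ AtpProj a b i)
    (h0 : δ 0 = 0) (h1 : inN (δ 1)) :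
    TwoTransitive (AtpProj a b i) := by
  intro x₁ y₁ x₂ y₂ hxy1 hxy2
  set n : F := δ 1 with hn
  obtain ⟨hn0, hnns⟩ := h1
  have hs1 : y₁ - x₁ ≠ 0 := sub_ne_zero.mpr (Ne.symm hxy1)
  have hs2 : y₂ - x₂ ≠ 0 := sub_ne_zero.mpr (Ne.symm hxy2)
  set s₁ : F := y₁ - x₁
  set s₂ : F := y₂ - x₂
  by_cases ht : IsSquare (s₂ * s₁⁻¹)
  · -- ratio is a square: use a single affine map
    have ht0 : s₂ * s₁⁻¹ ≠ 0 := mul_ne_zero hs2 (inv_ne_zero hs1)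
    refine ⟨affinePerm _ ht0 (x₂ - s₂ * s₁⁻¹ * x₁), atpProj_affine a b i ⟨ht0, ht⟩ _, ?_, ?_⟩
    · rw [affinePerm_apply]; ring
    · rw [affinePerm_apply]
      have : s₂ * s₁⁻¹ * y₁ + (x₂ - s₂ * s₁⁻¹ * x₁) = s₂ * s₁⁻¹ * s₁ + x₂ := by ring
      rw [this, mul_assoc, inv_mul_cancel₀ hs1, mul_one]
      ring
  · by_cases hsq1 : IsSquare s₁
    · -- s₁ square, ratio nonsquare : use g₂ ∘ δ ∘ g₁
      have hs2ns : ¬ IsSquare s₂ := by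
        intro h
        exact ht (h.mul ((isSquare_inv).mpr hsq1))
      have hr1 : inR s₁⁻¹ := ⟨inv_ne_zero hs1, isSquare_inv.mpr hsq1⟩
      have hr2sq : IsSquare (s₂ * n⁻¹) :=
        aux_nonsquare_mul_nonsquare hs2 hs2ns (inv_ne_zero hn0)
          (fun h => hnns (isSquare_inv.mp h))
      have hr20 : s₂ * n⁻¹ ≠ 0 := mul_ne_zero hs2 (inv_ne_zero hn0)
      set g₁ := affinePerm s₁⁻¹ hr1.1 (-(s₁⁻¹ * x₁))
      set g₂ := affinePerm (s₂ * n⁻¹) hr20 x₂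
      refine ⟨g₂ * δ * g₁, atpProj_mul (atpProj_mul (atpProj_affine a b i ⟨hr20, hr2sq⟩ x₂) hδ)
        (atpProj_affine a b i hr1 _), ?_, ?_⟩
      · have hg1 : g₁ x₁ = 0 := by rw [affinePerm_apply]; ring
        simp only [Equiv.Perm.mul_apply, hg1, h0]
        rw [affinePerm_apply]; ring
      · have hg1 : g₁ y₁ = 1 := by
          rw [affinePerm_apply]
          have : s₁⁻¹ * y₁ + -(s₁⁻¹ * x₁) = s₁⁻¹ * s₁ := by ring
          rw [this, inv_mul_cancel₀ hs1]
        simp only [Equiv.Perm.mul_apply, hg1, ← hn]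
        rw [affinePerm_apply, mul_assoc, inv_mul_cancel₀ hn0, mul_one]
        ring
    · -- s₁ nonsquare, ratio nonsquare : use g₂ ∘ δ⁻¹ ∘ g₁
      have hr1sq : IsSquare (n * s₁⁻¹) :=
        aux_nonsquare_mul_nonsquare hn0 hnns (inv_ne_zero hs1)
          (fun h => hsq1 (isSquare_inv.mp h))
      have hr10 : n * s₁⁻¹ ≠ 0 := mul_ne_zero hn0 (inv_ne_zero hs1)
      have hr2sq : IsSquare s₂ := by
        have := aux_nonsquare_mul_nonsquare (mul_ne_zero hs2 (inv_ne_zero hs1)) ht hs1 hsq1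
        rwa [mul_assoc, inv_mul_cancel₀ hs1, mul_one] at this
      set g₁ := affinePerm (n * s₁⁻¹) hr10 (-(n * s₁⁻¹ * x₁))
      set g₂ := affinePerm s₂ hs2 x₂
      refine ⟨g₂ * δ⁻¹ * g₁, atpProj_mul (atpProj_mul (atpProj_affine a b i ⟨hs2, hr2sq⟩ x₂)
        (atpProj_inv hδ)) (atpProj_affine a b i ⟨hr10, hr1sq⟩ _), ?_, ?_⟩
      · have hg1 : g₁ x₁ = 0 := by rw [affinePerm_apply]; ring
        have hδ0 : δ⁻¹ (0 : F) = 0 := by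
          nth_rewrite 1 [← h0]
          rw [perm_inv_apply_self]
        simp only [Equiv.Perm.mul_apply, hg1, hδ0]
        rw [affinePerm_apply]; ring
      · have hg1 : g₁ y₁ = n := by
          rw [affinePerm_apply]
          have : n * s₁⁻¹ * y₁ + -(n * s₁⁻¹ * x₁) = n * (s₁⁻¹ * s₁) := by ring
          rw [this, inv_mul_cancel₀ hs1, mul_one]
        have hδn : δ⁻¹ n = 1 := by rw [hn, perm_inv_apply_self]
        simp only [Equiv.Perm.mul_apply, hg1, hδn]
        rw [affinePerm_apply]; ring

end
end

section
/- Let q be an odd prime power, let (a,b) be a valid pair in F_q^2, and let i ∈ {1,2,3}. Then Atp_i(Q_{a,b}) contains an element whose order (as a permutation of F_q) is exactly (q-1)/2. -/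
open scoped Classical
open Finset

noncomputable section

variable {F : Type*} [Field F] [Fintype F]

/-!
Multiplication by a nonzero square `s` preserves `R_q` and `N_q`, hence commutes with the
operation of `Q_{a,b}`: `(x ↦ s x, x ↦ s x, x ↦ s x)` is an autotopism for every pair
`(a, b)`. For `s = u²` with `u` a generator of the cyclic group `F_q^*`, the permutation
`x ↦ s x` has order `(q - 1) / 2`.
-/

section

variable {K : Type*} [Field K]

theorem isSquare_mul_iff_of_isSquare_left {s t : K} (hs : IsSquare s) (hs0 : s ≠ 0) :
    IsSquare (s * t) ↔ IsSquare t :=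
  ⟨fun h => by simpa [hs0] using h.div hs, hs.mul⟩

theorem inR_mul_iff_of_isSquare_left {s t : K} (hs : IsSquare s) (hs0 : s ≠ 0) :
    inR (s * t) ↔ inR t := by
  simp [inR, isSquare_mul_iff_of_isSquare_left hs hs0, hs0]

theorem qmul_mul_left (a b : K) {s : K} (hs : IsSquare s) (hs0 : s ≠ 0) (x y : K) :
    qmul a b (s * x) (s * y) = s * qmul a b x y := by
  simp only [qmul, ← mul_sub, inR_mul_iff_of_isSquare_left hs hs0]
  split_ifs <;> ring

theorem isAutotopism_toPermHom_of_isSquare (a b : K) {u : Kˣ} (hu : IsSquare u) :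
    IsAutotopism a b (MulAction.toPermHom Kˣ K u) (MulAction.toPermHom Kˣ K u)
      (MulAction.toPermHom Kˣ K u) := fun x y =>
  qmul_mul_left a b (hu.map (Units.coeHom K)) u.ne_zero x y

theorem mem_atpProj_of_isAutotopism (a b : K) {g : Equiv.Perm K} (hg : IsAutotopism a b g g g)
    (i : Fin 3) : g ∈ AtpProj a b i :=
  ⟨g, g, g, hg, by fin_cases i <;> rfl⟩

end

theorem orderOf_sq_of_forall_mem_zpowers {G : Type*} [Group G] [Finite G] {u : G}
    (hu : ∀ x, x ∈ Subgroup.zpowers u) (heven : Even (Nat.card G)) :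
    orderOf (u ^ 2) = Nat.card G / 2 := by
  rw [orderOf_pow, orderOf_eq_card_of_forall_mem_zpowers hu,
    Nat.gcd_eq_right (even_iff_two_dvd.mp heven)]

theorem atp_proj_element_of_order_general
    (hodd : Odd (Fintype.card F)) (a b : F) (i : Fin 3) :
    ∃ g ∈ AtpProj a b i, orderOf g = (Fintype.card F - 1) / 2 := by
  obtain ⟨u, hu⟩ := IsCyclic.exists_generator (α := Fˣ)
  have hcard : Nat.card Fˣ = Fintype.card F - 1 := by
    rw [Nat.card_eq_fintype_card, Fintype.card_units]
  refine ⟨MulAction.toPermHom Fˣ F (u ^ 2), mem_atpProj_of_isAutotopism a b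
    (isAutotopism_toPermHom_of_isSquare a b (IsSquare.sq u)) i, ?_⟩
  rw [orderOf_injective _ MulAction.toPerm_injective,
    orderOf_sq_of_forall_mem_zpowers hu (hcard ▸ Nat.Odd.sub_odd hodd odd_one), hcard]

/-- Lemma 5.4: for each `i ∈ {1,2,3}`, `Atp_i(Q_{a,b})` contains an element of order
exactly `(q-1)/2`. -/
theorem atp_proj_element_of_order
    (hodd : Odd (Fintype.card F)) (a b : F) (hv : ValidPair a b) (i : Fin 3) :
    ∃ g ∈ AtpProj a b i, orderOf g = (Fintype.card F - 1) / 2 :=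
  atp_proj_element_of_order_general hodd a b i
end
end
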